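/- For n ≥ 1 and 0 ≤ k ≤ n-2, the number of planted ordered trees with n edges having exactly k exterior edges equals the number of planted ordered trees with n edges having exactly k edges at level h with h ≡ 0 (mod 3). -/

import Mathlib

/-!
Cutting off the stem turns a planted tree with `n + 1` edges into an arbitrary ordered tree
with `n` edges. By generating series in `x` (edges) and `u` (the statistic) on such trees:

* Exterior edges. The stem is exterior unless the tree `t` below it is a path, which gives
  `G = u L + (1 - u) / (1 - x)` with the forest series `L = 1 / (1 - x G)`.
* Levels `≡ 0 (mod 3)`. With `H r` the series for a root at level `r`, the standard first-child
  decomposition gives `H r = 1 + x u^[3 ∣ r + 1] H (r + 1) H r` and `H (r + 3) = H r`.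

Eliminating `L`, resp. `H 0` and `H 2`, both `G` and `H 1` solve
`(x² - x) F² + (1 - x u) F = 1 - x u`. Two solutions `F`, `F'` satisfy
`(F - F') ((x² - x) (F + F') + 1 - x u) = 0`, and the second factor is a unit, so `G = H 1`.
-/

/-- An ordered (plane) tree: an unlabeled rooted tree where the order of the subtrees
of each vertex is significant. -/
inductive OTree where
  | node : List OTree → OTree

namespace OTree

/-- The number of edges of an ordered tree. -/
def numEdges : OTree → ℕ
  | .node ts => (ts.attach.map (fun c => numEdges c.1 + 1)).sum
  decreasing_by
    simp_wf
    have := List.sizeOf_lt_of_mem c.2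
    simp at this ⊢
    omega


/-- The number of leaves of an ordered tree (a tree with no edges has one leaf,
its root). -/
def numLeaves : OTree → ℕ
  | .node [] => 1
  | .node (t :: ts) => ((t :: ts).attach.map (fun c => numLeaves c.1)).sum
  decreasing_by
    simp_wf
    have := List.sizeOf_lt_of_mem c.2
    simp at this ⊢
    omega


/-- The number of exterior edges: edges `uv` such that the planted subtree consisting
of `uv` and all descendants of `v` has at least two leaves. -/
def extEdges : OTree → ℕ
  | .node ts => (ts.attach.map
      (fun c => (if 2 ≤ numLeaves c.1 then 1 else 0) + extEdges c.1)).sum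
  decreasing_by
    simp_wf
    have := List.sizeOf_lt_of_mem c.2
    simp at this ⊢
    omega


/-- `edgesAtLevelFrom t cur h` is the number of edges of `t` at level `h`, where the
root of `t` is at distance `cur` from the global root (the level of an edge `uv` is
the distance from the root to the child `v`). -/
def edgesAtLevelFrom (t : OTree) (cur h : ℕ) : ℕ :=
  match t with
  | .node ts => (ts.attach.map
      (fun c => (if cur + 1 = h then 1 else 0) + edgesAtLevelFrom c.1 (cur + 1) h)).sum
  termination_by t
  decreasing_by
    simp_wf
    have := List.sizeOf_lt_of_mem c.2
    simp at this ⊢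
    omega


/-- The number of edges of `t` at level `h`. -/
def edgesAtLevel (t : OTree) (h : ℕ) : ℕ := edgesAtLevelFrom t 0 h

/-- `edgesLevelModFrom t cur m c`: the number of edges of `t` at level `h` with
`h ≡ c (mod m)`, the root being at distance `cur` from the global root. -/
def edgesLevelModFrom (t : OTree) (cur m c : ℕ) : ℕ :=
  match t with
  | .node ts => (ts.attach.map
      (fun x => (if (cur + 1) % m = c then 1 else 0) +
        edgesLevelModFrom x.1 (cur + 1) m c)).sum
  termination_by t
  decreasing_by
    simp_wf
    have := List.sizeOf_lt_of_mem x.2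
    simp at this ⊢
    omega


/-- The number of edges of `t` at level `h` with `h ≡ c (mod m)`. -/
def edgesLevelMod (t : OTree) (m c : ℕ) : ℕ := edgesLevelModFrom t 0 m c

/-- The preorder traversal word of an ordered tree: each edge contributes a `true`
(up step) when first passed going down and a `false` (down step) when passed going
up. -/
def toPath : OTree → List Bool
  | .node ts => (ts.attach.map (fun c => true :: (toPath c.1 ++ [false]))).flatten
  decreasing_by
    simp_wf
    have := List.sizeOf_lt_of_mem c.2
    simp at this ⊢
    omega


end OTree

/-- An ordered tree is planted if its root has exactly one child. -/
def OTree.IsPlanted : OTree → Prop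
  | .node ts => ts.length = 1


open Finset PowerSeries

theorem List.prod_map_pow_eq_pow_sum {ι M : Type*} [CommMonoid M] (l : List ι) (f : ι → ℕ)
    (a : M) : (l.map fun i => a ^ f i).prod = a ^ (l.map f).sum := by
  induction l with
  | nil => simp
  | cons i l ih => simp [ih, pow_add]

theorem eq_of_quadratic_of_isUnit {A : Type*} [CommRing A] {a b x y : A}
    (hxy : a * x ^ 2 + b * x = a * y ^ 2 + b * y) (hu : IsUnit (a * (x + y) + b)) : x = y := by
  have h : (x - y) * (a * (x + y) + b) = 0 := by linear_combination hxy
  exact sub_eq_zero.1 (hu.mul_left_eq_zero.1 h)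

namespace OTree

noncomputable instance : DecidableEq OTree := Classical.decEq _

theorem induction_node {P : OTree → Prop} (h : ∀ ts, (∀ t ∈ ts, P t) → P (node ts)) :
    ∀ t, P t
  | .node ts => h ts fun t _ => induction_node h t
  decreasing_by
    have := List.sizeOf_lt_of_mem ‹t ∈ ts›
    simp only [node.sizeOf_spec]
    omega

theorem numEdges_node (ts : List OTree) :
    numEdges (node ts) = (ts.map fun c => numEdges c + 1).sum := by
  rw [numEdges]; simp only [List.map_subtype, List.unattach_attach]

theorem numLeaves_node_nil : numLeaves (node []) = 1 := by
  rw [numLeaves]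

theorem numLeaves_node_cons (t : OTree) (ts : List OTree) :
    numLeaves (node (t :: ts)) = ((t :: ts).map numLeaves).sum := by
  rw [numLeaves]; simp only [List.map_subtype, List.unattach_attach]

theorem extEdges_node (ts : List OTree) :
    extEdges (node ts) =
      (ts.map fun c => (if 2 ≤ numLeaves c then 1 else 0) + extEdges c).sum := by
  rw [extEdges]
  exact congrArg List.sum
    (List.attach_map_val (f := fun c => (if 2 ≤ numLeaves c then 1 else 0) + extEdges c))

theorem edgesLevelModFrom_node (ts : List OTree) (r m c : ℕ) :
    edgesLevelModFrom (node ts) r m c =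
      (ts.map fun t => (if (r + 1) % m = c then 1 else 0) +
        edgesLevelModFrom t (r + 1) m c).sum := by
  rw [edgesLevelModFrom]; simp only [List.map_subtype, List.unattach_attach]

theorem numEdges_node_nil : numEdges (node []) = 0 := by
  simp [numEdges_node]

theorem numEdges_node_cons (t : OTree) (ts : List OTree) :
    numEdges (node (t :: ts)) = numEdges t + 1 + numEdges (node ts) := by
  simp [numEdges_node]

theorem one_le_numLeaves (t : OTree) : 1 ≤ numLeaves t := by
  induction t using induction_node with
  | h ts ih =>
  cases ts with
  | nil => rw [numLeaves_node_nil]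
  | cons t ts =>
    have := ih t List.mem_cons_self
    rw [numLeaves_node_cons, List.map_cons, List.sum_cons]
    omega

def path : ℕ → OTree
  | 0 => node []
  | n + 1 => node [path n]

theorem numEdges_path (n : ℕ) : numEdges (path n) = n := by
  induction n with
  | zero => simp [path, numEdges_node]
  | succ n ih => simp [path, numEdges_node, ih]

theorem numLeaves_path (n : ℕ) : numLeaves (path n) = 1 := by
  induction n with
  | zero => simp [path, numLeaves_node_nil]
  | succ n ih => simp [path, numLeaves_node_cons, ih]

theorem extEdges_path (n : ℕ) : extEdges (path n) = 0 := by
  induction n with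
  | zero => simp [path, extEdges_node]
  | succ n ih => simp [path, extEdges_node, ih, numLeaves_path]

theorem eq_path_of_numLeaves_eq_one {t : OTree} (h : numLeaves t = 1) : t = path (numEdges t) := by
  induction t using induction_node with
  | h ts ih =>
  match ts with
  | [] => rw [numEdges_node_nil, path]
  | [c] =>
    rw [numLeaves_node_cons, List.map_singleton, List.sum_singleton] at h
    rw [numEdges_node_cons, numEdges_node_nil, path, ← ih c (List.mem_singleton_self c) h]
  | c :: d :: ts =>
    have := one_le_numLeaves c
    have := one_le_numLeaves d
    simp only [numLeaves_node_cons, List.map_cons, List.sum_cons] at h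
    omega

noncomputable def forests : ℕ → Finset (List OTree)
  | 0 => {[]}
  | n + 1 => (antidiagonal n).attach.biUnion fun p =>
      ((forests p.1.1).image node ×ˢ forests p.1.2).image fun q => q.1 :: q.2
  decreasing_by all_goals (have := HasAntidiagonal.mem_antidiagonal.1 p.2; omega)

noncomputable def trees (n : ℕ) : Finset OTree := (forests n).image node

theorem mem_forests {n : ℕ} {ts : List OTree} : ts ∈ forests n ↔ numEdges (node ts) = n := by
  induction n using Nat.strong_induction_on generalizing ts with
  | _ n ih =>
  cases n with
  | zero => cases ts <;> simp [forests, numEdges_node_nil, numEdges_node_cons]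
  | succ n =>
    rw [forests]
    simp only [mem_biUnion, mem_attach, true_and, Subtype.exists,
      HasAntidiagonal.mem_antidiagonal, mem_image, mem_product, Prod.exists]
    constructor
    · rintro ⟨i, j, hij, t, rs, ⟨⟨ws, hws, rfl⟩, hrs⟩, rfl⟩
      rw [ih i (by omega)] at hws
      rw [ih j (by omega)] at hrs
      rw [numEdges_node_cons]
      omega
    · intro h
      cases ts with
      | nil => simp [numEdges_node_nil] at h
      | cons t rs =>
        obtain ⟨ws⟩ := t
        rw [numEdges_node_cons] at h
        exact ⟨numEdges (node ws), numEdges (node rs), by omega, node ws, rs,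
          ⟨⟨ws, (ih _ (by omega)).2 rfl, rfl⟩, (ih _ (by omega)).2 rfl⟩, rfl⟩

theorem mem_trees {n : ℕ} {t : OTree} : t ∈ trees n ↔ numEdges t = n := by
  obtain ⟨ts⟩ := t
  simp [trees, mem_forests]

theorem sum_trees {M : Type*} [AddCommMonoid M] (g : OTree → M) (n : ℕ) :
    ∑ t ∈ trees n, g t = ∑ ts ∈ forests n, g (node ts) :=
  sum_image fun _ _ _ _ h => node.inj h

theorem sum_forests_succ {M : Type*} [AddCommMonoid M] (F : List OTree → M) (n : ℕ) :
    ∑ ts ∈ forests (n + 1), F ts =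
      ∑ p ∈ antidiagonal n, ∑ t ∈ trees p.1, ∑ rs ∈ forests p.2, F (t :: rs) := by
  rw [forests, sum_biUnion]
  · rw [← sum_attach (antidiagonal n)]
    refine sum_congr rfl fun p _ => ?_
    rw [sum_image fun _ _ _ _ h => Prod.ext (List.cons.inj h).1 (List.cons.inj h).2, sum_product]
    rfl
  · rintro p - q - hpq
    refine disjoint_left.2 fun l hp hq => hpq ?_
    simp only [mem_image, mem_product, Prod.exists] at hp hq
    obtain ⟨_, rs, ⟨⟨ws, hws, rfl⟩, -⟩, rfl⟩ := hp
    obtain ⟨_, rs', ⟨⟨ws', hws', rfl⟩, -⟩, h⟩ := hq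
    obtain ⟨rfl⟩ := (List.cons.inj h).1
    have hpq : p.1.1 = q.1.1 := (mem_forests.1 hws).symm.trans (mem_forests.1 hws')
    have hp := HasAntidiagonal.mem_antidiagonal.1 p.2
    have hq := HasAntidiagonal.mem_antidiagonal.1 q.2
    exact Subtype.ext (Prod.ext hpq (by omega))

section Series

variable {R : Type*} [CommSemiring R]

noncomputable def treeSeries (w : OTree → R) : R⟦X⟧ :=
  mk fun n => ∑ t ∈ trees n, w t

noncomputable def forestSeries (w : OTree → R) : R⟦X⟧ :=
  mk fun n => ∑ ts ∈ forests n, (ts.map w).prod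

theorem forestSeries_eq (w : OTree → R) :
    forestSeries w = 1 + X * (treeSeries w * forestSeries w) := by
  ext n
  cases n with
  | zero => simp [forestSeries, forests]
  | succ n =>
    rw [map_add, coeff_succ_X_mul, coeff_mul, coeff_one, if_neg n.succ_ne_zero, zero_add,
      forestSeries, coeff_mk, sum_forests_succ]
    refine sum_congr rfl fun p _ => ?_
    simp only [treeSeries, coeff_mk, sum_mul_sum, List.map_cons, List.prod_cons]

theorem treeSeries_eq_forestSeries {g w : OTree → R}
    (h : ∀ ts, g (node ts) = (ts.map w).prod) : treeSeries g = forestSeries w := by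
  ext n
  simp only [treeSeries, forestSeries, coeff_mk, sum_trees, h]

theorem treeSeries_add (f g : OTree → R) :
    treeSeries (fun t => f t + g t) = treeSeries f + treeSeries g := by
  ext n
  simp only [treeSeries, coeff_mk, map_add, sum_add_distrib]

theorem treeSeries_const_mul (a : R) (f : OTree → R) :
    treeSeries (fun t => a * f t) = C a * treeSeries f := by
  ext n
  simp only [treeSeries, coeff_mk, coeff_C_mul, mul_sum]

theorem treeSeries_numLeaves_eq_one :
    treeSeries (fun t => if numLeaves t = 1 then (1 : R) else 0) = PowerSeries.mk 1 := by
  ext n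
  rw [treeSeries, coeff_mk, coeff_mk, sum_eq_single_of_mem (path n)]
  · simp [numLeaves_path]
  · exact mem_trees.2 (numEdges_path n)
  · intro t ht hne
    exact if_neg fun h => hne (by rw [eq_path_of_numLeaves_eq_one h, mem_trees.1 ht])

end Series

theorem coeff_coeff_treeSeries_X_pow (f : OTree → ℕ) (n k : ℕ) :
    (coeff n (treeSeries fun t => (Polynomial.X : Polynomial ℤ) ^ f t)).coeff k =
      Nat.card {t : OTree // numEdges t = n ∧ f t = k} := by
  rw [treeSeries, coeff_mk, Polynomial.finsetSum_coeff]
  simp only [Polynomial.coeff_X_pow, sum_boole, ← Nat.card_eq_finsetCard]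
  exact congrArg _ (Nat.card_congr (Equiv.subtypeEquivRight fun t => by simp [mem_trees, eq_comm]))

theorem card_planted_succ (f : OTree → ℕ) (n k : ℕ) :
    Nat.card {t : OTree // t.IsPlanted ∧ t.numEdges = n + 1 ∧ f t = k} =
      Nat.card {t : OTree // t.numEdges = n ∧ f (node [t]) = k} := by
  have hstem (t : OTree) : numEdges (node [t]) = numEdges t + 1 := by
    rw [numEdges_node_cons, numEdges_node_nil]
  refine (Nat.card_eq_of_bijective (fun t => ⟨node [t.1], rfl, by rw [hstem, t.2.1], t.2.2⟩)
    ⟨?_, ?_⟩).symm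
  · rintro ⟨s, _⟩ ⟨t, _⟩ h
    simpa using h
  · rintro ⟨⟨ts⟩, hplanted, hn, hf⟩
    match ts, hplanted with
    | [t], _ =>
      rw [hstem] at hn
      exact ⟨⟨t, by omega, hf⟩, rfl⟩

section Statistics

variable {R : Type*} [CommRing R]

theorem extEdges_node_singleton (t : OTree) :
    extEdges (node [t]) = (if 2 ≤ numLeaves t then 1 else 0) + extEdges t := by
  simp [extEdges_node]

theorem extEdges_node_eq_sum (ts : List OTree) :
    extEdges (node ts) = (ts.map fun c => extEdges (node [c])).sum := by
  rw [extEdges_node]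
  exact congrArg List.sum (List.map_congr_left fun c _ => (extEdges_node_singleton c).symm)

theorem pow_extEdges_node_singleton (u : R) (t : OTree) :
    u ^ extEdges (node [t]) = u * u ^ extEdges t + (1 - u) * if numLeaves t = 1 then 1 else 0 := by
  rw [extEdges_node_singleton]
  by_cases h : numLeaves t = 1
  · rw [eq_path_of_numLeaves_eq_one h, numLeaves_path, extEdges_path]
    simp
  · have := one_le_numLeaves t
    rw [if_pos (by omega), if_neg h]
    ring

noncomputable def exteriorSeries (u : R) : R⟦X⟧ :=
  treeSeries fun t => u ^ extEdges (node [t])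

theorem exteriorSeries_eq (u : R) :
    exteriorSeries u = C u * forestSeries (fun t => u ^ extEdges (node [t])) +
      (1 - C u) * PowerSeries.mk 1 := by
  have hforest : treeSeries (fun t => u ^ extEdges t) =
      forestSeries fun t => u ^ extEdges (node [t]) :=
    treeSeries_eq_forestSeries fun ts => by
      rw [extEdges_node_eq_sum, List.prod_map_pow_eq_pow_sum]
  rw [← hforest, exteriorSeries, funext (pow_extEdges_node_singleton u), treeSeries_add,
    treeSeries_const_mul, treeSeries_const_mul, treeSeries_numLeaves_eq_one, map_sub, map_one]

theorem exteriorSeries_quadratic (u : R) :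
    (X ^ 2 - X) * exteriorSeries u ^ 2 + (1 - X * C u) * exteriorSeries u = 1 - X * C u := by
  have hG := exteriorSeries_eq u
  have hL : forestSeries (fun t => u ^ extEdges (node [t])) =
      1 + X * (exteriorSeries u * forestSeries fun t => u ^ extEdges (node [t])) :=
    forestSeries_eq _
  have hP := mk_one_mul_one_sub_eq_one R
  -- `1 - X` and `1 - X * exteriorSeries u` are the inverses of `mk 1` and of the forest series.
  linear_combination (1 - X) * (1 - X * exteriorSeries u) * hG
    + C u * (1 - X) * hL + (1 - C u) * (1 - X * exteriorSeries u) * hP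

theorem edgesLevelModFrom_add_modulus (t : OTree) (r m c : ℕ) :
    edgesLevelModFrom t (r + m) m c = edgesLevelModFrom t r m c := by
  induction t using induction_node generalizing r with
  | h ts ih =>
  rw [edgesLevelModFrom_node, edgesLevelModFrom_node, Nat.add_right_comm, Nat.add_mod_right]
  exact congrArg List.sum (List.map_congr_left fun t ht => by rw [ih t ht])

theorem edgesLevelMod_node_singleton (t : OTree) (m c : ℕ) :
    edgesLevelMod (node [t]) m c = (if 1 % m = c then 1 else 0) + edgesLevelModFrom t 1 m c := by
  simp [edgesLevelMod, edgesLevelModFrom_node]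

noncomputable def levelSeries (u : R) (m c r : ℕ) : R⟦X⟧ :=
  treeSeries fun t => u ^ edgesLevelModFrom t r m c

theorem levelSeries_add_modulus (u : R) (m c r : ℕ) :
    levelSeries u m c (r + m) = levelSeries u m c r := by
  simp only [levelSeries, edgesLevelModFrom_add_modulus]

theorem levelSeries_eq (u : R) (m c r : ℕ) :
    levelSeries u m c r = 1 + X * (C (u ^ if (r + 1) % m = c then 1 else 0) *
      levelSeries u m c (r + 1) * levelSeries u m c r) := by
  set δ := if (r + 1) % m = c then 1 else 0
  have hforest : levelSeries u m c r =
      forestSeries fun t => u ^ δ * u ^ edgesLevelModFrom t (r + 1) m c :=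
    treeSeries_eq_forestSeries fun ts => by
      simp only [edgesLevelModFrom_node, ← pow_add, List.prod_map_pow_eq_pow_sum]; rfl
  rw [hforest, levelSeries, ← treeSeries_const_mul]
  exact forestSeries_eq _

theorem levelSeries_quadratic (u : R) :
    (X ^ 2 - X) * levelSeries u 3 0 1 ^ 2 + (1 - X * C u) * levelSeries u 3 0 1 = 1 - X * C u := by
  have h0 : levelSeries u 3 0 0 = 1 + X * (levelSeries u 3 0 1 * levelSeries u 3 0 0) := by
    simpa using levelSeries_eq u 3 0 0
  have h1 : levelSeries u 3 0 1 = 1 + X * (levelSeries u 3 0 2 * levelSeries u 3 0 1) := by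
    simpa using levelSeries_eq u 3 0 1
  have h2 : levelSeries u 3 0 2 = 1 + X * (C u * levelSeries u 3 0 0 * levelSeries u 3 0 2) := by
    simpa [← levelSeries_add_modulus u 3 0 0] using levelSeries_eq u 3 0 2
  linear_combination (1 - X * levelSeries u 3 0 1 - X * C u) * h1
    + X * levelSeries u 3 0 1 * (1 - X * levelSeries u 3 0 1) * h2
    + X ^ 2 * C u * levelSeries u 3 0 1 * levelSeries u 3 0 2 * h0

theorem exteriorSeries_eq_levelSeries (u : R) : exteriorSeries u = levelSeries u 3 0 1 := by
  refine eq_of_quadratic_of_isUnit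
    ((exteriorSeries_quadratic u).trans (levelSeries_quadratic u).symm) ?_
  rw [isUnit_iff_constantCoeff]
  simp

end Statistics

end OTree

theorem planted_exterior_edges_equidistributed_general (n k : ℕ) (hn : 1 ≤ n) :
    Nat.card {t : OTree // t.IsPlanted ∧ t.numEdges = n ∧ t.extEdges = k} =
      Nat.card {t : OTree // t.IsPlanted ∧ t.numEdges = n ∧ t.edgesLevelMod 3 0 = k} := by
  obtain ⟨n, rfl⟩ := Nat.exists_eq_add_of_le' hn
  rw [OTree.card_planted_succ, OTree.card_planted_succ]
  have h := congrArg (fun F => (coeff n F).coeff k)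
    (OTree.exteriorSeries_eq_levelSeries (Polynomial.X : Polynomial ℤ))
  simp only [OTree.exteriorSeries, OTree.levelSeries, OTree.coeff_coeff_treeSeries_X_pow] at h
  simp only [OTree.edgesLevelMod_node_singleton, Nat.reduceMod, one_ne_zero, ↓reduceIte, zero_add]
  exact_mod_cast h

/-- For `0 ≤ k ≤ n-2`, the number of planted ordered trees with `n` edges having
exactly `k` exterior edges equals the number of planted ordered trees with `n` edges
having exactly `k` edges at level `h` with `h ≡ 0 (mod 3)`. -/
theorem planted_exterior_edges_equidistributed (n k : ℕ) (hn : 1 ≤ n) (hk : k ≤ n - 2) :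
    Nat.card {t : OTree // t.IsPlanted ∧ t.numEdges = n ∧ t.extEdges = k} =
      Nat.card {t : OTree // t.IsPlanted ∧ t.numEdges = n ∧ t.edgesLevelMod 3 0 = k} :=
  planted_exterior_edges_equidistributed_general n k hn
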